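/- The polynomial P = y₀₀²y₀₂ − y₁₂y₂₂² − y₀₁y₁₁² − 5y₀₁²y₂₂ + (−y₀₀y₀₁ + y₀₂y₂₂ − y₁₁y₁₂)y_g − y_g³ is an equation for the image of the map φ_{2K_Θ} on the Klein curve: substituting y₀₀ = p₀₁², y₀₁ = p₀₁p₀₂, y₀₂ = p₀₁p₁₂, y₁₁ = p₀₂², y₁₂ = p₀₂p₁₂, y₂₂ = p₁₂², y_g = g̃ into P produces a polynomial in ℂ[u₀,u₁,u₂,v₀,v₁,v₂] that lies in the ideal generated by f(u₀,u₁,u₂) and f(v₀,v₁,v₂); i.e. there exist polynomials A, B ∈ ℂ[u₀,u₁,u₂,v₀,v₁,v₂] with P(p₀₁², p₀₁p₀₂, p₀₁p₁₂, p₀₂², p₀₂p₁₂, p₁₂², g̃) = A·f(u) + B·f(v). -/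

import Mathlib

/-! The substituted polynomial `Q(u, v)` has bidegree `(6, 6)`, is symmetric under `u ↔ v`, and is
invariant under the cyclic shift `z₀ ↦ z₁ ↦ z₂ ↦ z₀`, an automorphism of the Klein quartic.
So the cofactors can be taken of the form `Q = A(u, v) f(u) + A(v, u) f(v)` with `A` of bidegree
`(2, 6)` and shift-invariant, i.e. the cyclic orbit sum of eight monomials. Such an `A`, found by
division modulo `f(u), f(v)` and averaging over the symmetries, makes the claim a ring identity
with integer coefficients, valid in every commutative ring.
-/

open MvPolynomial

namespace Klein56

/-- The Klein quartic in the variables `u₀,u₁,u₂` (variables `0,1,2` of `Fin 6`):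
`f(u) = u₀u₁³ + u₁u₂³ + u₂u₀³`. -/
noncomputable def fu : MvPolynomial (Fin 6) ℂ :=
  X 0 * X 1 ^ 3 + X 1 * X 2 ^ 3 + X 2 * X 0 ^ 3

/-- The Klein quartic in the variables `v₀,v₁,v₂` (variables `3,4,5` of `Fin 6`):
`f(v) = v₀v₁³ + v₁v₂³ + v₂v₀³`. -/
noncomputable def fv : MvPolynomial (Fin 6) ℂ :=
  X 3 * X 4 ^ 3 + X 4 * X 5 ^ 3 + X 5 * X 3 ^ 3

/-- `p₀₁ = u₀v₁ − u₁v₀`. -/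
noncomputable def p01 : MvPolynomial (Fin 6) ℂ := X 0 * X 4 - X 1 * X 3
/-- `p₀₂ = u₀v₂ − u₂v₀`. -/
noncomputable def p02 : MvPolynomial (Fin 6) ℂ := X 0 * X 5 - X 2 * X 3
/-- `p₁₂ = u₁v₂ − u₂v₁`. -/
noncomputable def p12 : MvPolynomial (Fin 6) ℂ := X 1 * X 5 - X 2 * X 4

/-- `g̃ = u₀u₁v₁² + u₁u₂v₂² + u₂u₀v₀² + v₀v₁u₁² + v₁v₂u₂² + v₂v₀u₀²`. -/
noncomputable def gt : MvPolynomial (Fin 6) ℂ :=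
  X 0 * X 1 * X 4 ^ 2 + X 1 * X 2 * X 5 ^ 2 + X 2 * X 0 * X 3 ^ 2
    + X 3 * X 4 * X 1 ^ 2 + X 4 * X 5 * X 2 ^ 2 + X 5 * X 3 * X 0 ^ 2

/-- The polynomial
`P = y₀₀²y₀₂ − y₁₂y₂₂² − y₀₁y₁₁² − 5y₀₁²y₂₂ + (−y₀₀y₀₁ + y₀₂y₂₂ − y₁₁y₁₂)y_g − y_g³`
in the variables `(y₀₀, y₀₁, y₀₂, y₁₁, y₁₂, y₂₂, y_g)`, indexed by `Fin 7`. -/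
noncomputable def P : MvPolynomial (Fin 7) ℂ :=
  X 0 ^ 2 * X 2 - X 4 * X 5 ^ 2 - X 1 * X 3 ^ 2 - 5 * X 1 ^ 2 * X 5
    + (-(X 0 * X 1) + X 2 * X 5 - X 3 * X 4) * X 6 - X 6 ^ 3

section Identity

variable {R : Type*} [CommRing R]

def klein (z₀ z₁ z₂ : R) : R := z₀ * z₁ ^ 3 + z₁ * z₂ ^ 3 + z₂ * z₀ ^ 3

def evalP (y₀₀ y₀₁ y₀₂ y₁₁ y₁₂ y₂₂ y_g : R) : R :=
  y₀₀ ^ 2 * y₀₂ - y₁₂ * y₂₂ ^ 2 - y₀₁ * y₁₁ ^ 2 - 5 * y₀₁ ^ 2 * y₂₂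
    + (-(y₀₀ * y₀₁) + y₀₂ * y₂₂ - y₁₁ * y₁₂) * y_g - y_g ^ 3

def kleinCofactorTerm (u₀ u₁ v₀ v₁ v₂ : R) : R :=
  u₀ ^ 2 * (-6 * v₀ ^ 4 * v₂ ^ 2 - 3 * v₀ ^ 2 * v₁ ^ 3 * v₂ + 3 * v₀ * v₁ * v₂ ^ 4 - v₁ ^ 6)
    + u₀ * u₁ * (-9 * v₀ ^ 3 * v₁ ^ 2 * v₂ - 6 * v₀ ^ 2 * v₂ ^ 4 + 3 * v₀ * v₁ ^ 5
      + 7 * v₁ ^ 3 * v₂ ^ 3)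

def kleinCofactor (u₀ u₁ u₂ v₀ v₁ v₂ : R) : R :=
  kleinCofactorTerm u₀ u₁ v₀ v₁ v₂ + kleinCofactorTerm u₁ u₂ v₁ v₂ v₀
    + kleinCofactorTerm u₂ u₀ v₂ v₀ v₁

theorem evalP_plucker_eq (u₀ u₁ u₂ v₀ v₁ v₂ : R) {p₀₁ p₀₂ p₁₂ g : R}
    (h₀₁ : p₀₁ = u₀ * v₁ - u₁ * v₀) (h₀₂ : p₀₂ = u₀ * v₂ - u₂ * v₀)
    (h₁₂ : p₁₂ = u₁ * v₂ - u₂ * v₁)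
    (hg : g = u₀ * u₁ * v₁ ^ 2 + u₁ * u₂ * v₂ ^ 2 + u₂ * u₀ * v₀ ^ 2
      + v₀ * v₁ * u₁ ^ 2 + v₁ * v₂ * u₂ ^ 2 + v₂ * v₀ * u₀ ^ 2) :
    evalP (p₀₁ ^ 2) (p₀₁ * p₀₂) (p₀₁ * p₁₂) (p₀₂ ^ 2) (p₀₂ * p₁₂) (p₁₂ ^ 2) g =
      kleinCofactor u₀ u₁ u₂ v₀ v₁ v₂ * klein u₀ u₁ u₂
        + kleinCofactor v₀ v₁ v₂ u₀ u₁ u₂ * klein v₀ v₁ v₂ := by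
  subst h₀₁ h₀₂ h₁₂ hg
  simp only [evalP, kleinCofactor, kleinCofactorTerm, klein]
  ring

end Identity

theorem aeval_P {A : Type*} [CommRing A] [Algebra ℂ A] (a₀ a₁ a₂ a₃ a₄ a₅ a₆ : A) :
    aeval ![a₀, a₁, a₂, a₃, a₄, a₅, a₆] P = evalP a₀ a₁ a₂ a₃ a₄ a₅ a₆ := by
  simp [P, evalP]

/-- `P` is an equation for the image of `φ_{2K_Θ}` on the Klein curve:
substituting `(p₀₁², p₀₁p₀₂, p₀₁p₁₂, p₀₂², p₀₂p₁₂, p₁₂², g̃)` into `P` gives a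
polynomial lying in the ideal generated by `f(u)` and `f(v)`. -/
theorem P_vanishes_on_image :
    ∃ A B : MvPolynomial (Fin 6) ℂ,
      aeval ![p01 ^ 2, p01 * p02, p01 * p12, p02 ^ 2, p02 * p12, p12 ^ 2, gt] P =
        A * fu + B * fv := by
  refine ⟨kleinCofactor (X 0) (X 1) (X 2) (X 3) (X 4) (X 5),
    kleinCofactor (X 3) (X 4) (X 5) (X 0) (X 1) (X 2), ?_⟩
  rw [aeval_P]
  exact evalP_plucker_eq (X 0) (X 1) (X 2) (X 3) (X 4) (X 5) rfl rfl rfl rfl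

end Klein56
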